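/- For any seminormal quasi-crystals Q and Q' of the same type Φ, the quasi-tensor product Q ⊗̈ Q' (with the structure maps defined below on Q × Q') satisfies all the axioms of a seminormal quasi-crystal of type Φ. -/

import Mathlib

/-! ## Root system setting -/

/-- The data of a root system `Φ` in a Euclidean space `V`, together with a choice of
simple roots `(α_i)_{i ∈ ι}` and a weight lattice `Λ`, with the integer-valued coroot
pairing `pair λ i = ⟨λ, α_i^∨⟩ = 2⟪λ, α_i⟫/⟪α_i, α_i⟫` on the weight lattice. -/
structure QCSetting (V : Type*) [NormedAddCommGroup V] [InnerProductSpace ℝ V]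
    (ι : Type*) where
  Φ : Set V
  finite : Φ.Finite
  nonempty : Φ.Nonempty
  zero_not_mem : (0 : V) ∉ Φ
  reflect_mem : ∀ a ∈ Φ, ∀ b ∈ Φ, b - (2 * (inner ℝ b a : ℝ) / (inner ℝ a a : ℝ)) • a ∈ Φ
  smul_root : ∀ a ∈ Φ, ∀ k : ℝ, k • a ∈ Φ → k = 1 ∨ k = -1
  simple : ι → V
  simple_mem : ∀ i, simple i ∈ Φ
  simple_indep : LinearIndependent ℝ simple
  Λ : AddSubgroup V
  lattice_spans : Submodule.span ℝ (Λ : Set V) = ⊤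
  root_mem_lattice : ∀ a ∈ Φ, a ∈ Λ
  pair : Λ → ι → ℤ
  pair_spec : ∀ (v : Λ) (i : ι),
    (pair v i : ℝ) = 2 * (inner ℝ (v : V) (simple i) : ℝ) / (inner ℝ (simple i) (simple i) : ℝ)

variable {V : Type*} [NormedAddCommGroup V] [InnerProductSpace ℝ V] {ι : Type*}

/-! ## Quasi-crystals -/

/-- The structure maps of a quasi-crystal of type `S` on an underlying set `Q`:
a weight map `wt` with values in the weight lattice, partial quasi-Kashiwara operators
`e i, f i : Q → Q ⊔ {⊥}` (realized as `Option`-valued maps, `none` playing the role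
of `⊥`), and maps `ε i, φ i : Q → ℤ ∪ {+∞}` (realized as `WithTop ℤ`). -/
structure QC (S : QCSetting V ι) (Q : Type*) where
  wt : Q → S.Λ
  e : ι → Q → Option Q
  f : ι → Q → Option Q
  ε : ι → Q → WithTop ℤ
  φ : ι → Q → WithTop ℤ

/-- `k`-fold iteration of a partial map `g : Q → Option Q` starting at `x`. -/
def optIter {Q : Type*} (g : Q → Option Q) (k : ℕ) (x : Q) : Option Q :=
  (fun o => o.bind g)^[k] (some x)

/-- The axioms of a seminormal quasi-crystal. -/
structure QC.IsSeminormal {S : QCSetting V ι} {Q : Type*} (𝒬 : QC S Q) : Prop where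
  phi_eq : ∀ i x, 𝒬.φ i x = 𝒬.ε i x + ((S.pair (𝒬.wt x) i : ℤ) : WithTop ℤ)
  wt_e : ∀ i x y, 𝒬.e i x = some y → (𝒬.wt y : V) = (𝒬.wt x : V) + S.simple i
  wt_f : ∀ i x y, 𝒬.f i x = some y → (𝒬.wt y : V) = (𝒬.wt x : V) - S.simple i
  e_iff_f : ∀ i x y, 𝒬.e i x = some y ↔ 𝒬.f i y = some x
  e_of_top : ∀ i x, 𝒬.ε i x = ⊤ → 𝒬.e i x = none
  f_of_top : ∀ i x, 𝒬.ε i x = ⊤ → 𝒬.f i x = none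
  eps_spec : ∀ i x, 𝒬.ε i x ≠ ⊤ → ∃ n : ℕ, 𝒬.ε i x = ((n : ℤ) : WithTop ℤ) ∧
    IsGreatest {k : ℕ | (optIter (𝒬.e i) k x).isSome} n
  phi_spec : ∀ i x, 𝒬.ε i x ≠ ⊤ → ∃ n : ℕ, 𝒬.φ i x = ((n : ℤ) : WithTop ℤ) ∧
    IsGreatest {k : ℕ | (optIter (𝒬.f i) k x).isSome} n

/-- A seminormal crystal is a seminormal quasi-crystal in which `ε i x ≠ +∞` always. -/
def QC.IsSeminormalCrystal {S : QCSetting V ι} {Q : Type*} (𝒬 : QC S Q) : Prop :=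
  𝒬.IsSeminormal ∧ ∀ i x, 𝒬.ε i x ≠ ⊤

/-! ## Tensor product -/

/-- The tensor product of two quasi-crystals of the same type. -/
noncomputable def QC.tensor {S : QCSetting V ι} {Q Q' : Type*} (𝒬 : QC S Q) (𝒬' : QC S Q') :
    QC S (Q × Q') where
  wt p := 𝒬.wt p.1 + 𝒬'.wt p.2
  ε i p := max (𝒬.ε i p.1) (𝒬'.ε i p.2 + ((-(S.pair (𝒬.wt p.1) i) : ℤ) : WithTop ℤ))
  φ i p := max (𝒬.φ i p.1 + ((S.pair (𝒬'.wt p.2) i : ℤ) : WithTop ℤ)) (𝒬'.φ i p.2)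
  e i p := if 𝒬'.ε i p.2 ≤ 𝒬.φ i p.1
    then (𝒬.e i p.1).map (fun y => (y, p.2))
    else (𝒬'.e i p.2).map (fun y => (p.1, y))
  f i p := if 𝒬'.ε i p.2 < 𝒬.φ i p.1
    then (𝒬.f i p.1).map (fun y => (y, p.2))
    else (𝒬'.f i p.2).map (fun y => (p.1, y))

/-! ## Quasi-tensor product -/

/-- The (inverse-free) quasi-tensor product of two quasi-crystals of the same type. -/
noncomputable def QC.qtensor {S : QCSetting V ι} {Q Q' : Type*} (𝒬 : QC S Q) (𝒬' : QC S Q') :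
    QC S (Q × Q') where
  wt p := 𝒬.wt p.1 + 𝒬'.wt p.2
  ε i p := if 0 < 𝒬.φ i p.1 ∧ 0 < 𝒬'.ε i p.2 then ⊤
    else max (𝒬.ε i p.1) (𝒬'.ε i p.2 + ((-(S.pair (𝒬.wt p.1) i) : ℤ) : WithTop ℤ))
  φ i p := if 0 < 𝒬.φ i p.1 ∧ 0 < 𝒬'.ε i p.2 then ⊤
    else max (𝒬.φ i p.1 + ((S.pair (𝒬'.wt p.2) i : ℤ) : WithTop ℤ)) (𝒬'.φ i p.2)
  e i p := if 0 < 𝒬.φ i p.1 ∧ 0 < 𝒬'.ε i p.2 then none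
    else if 𝒬'.ε i p.2 ≤ 𝒬.φ i p.1 then (𝒬.e i p.1).map (fun y => (y, p.2))
    else (𝒬'.e i p.2).map (fun y => (p.1, y))
  f i p := if 0 < 𝒬.φ i p.1 ∧ 0 < 𝒬'.ε i p.2 then none
    else if 𝒬'.ε i p.2 < 𝒬.φ i p.1 then (𝒬.f i p.1).map (fun y => (y, p.2))
    else (𝒬'.f i p.2).map (fun y => (p.1, y))

/-! ## Homomorphisms -/

/-- A quasi-crystal homomorphism `ψ : 𝒬 → 𝒬'`, i.e. a map `Q ⊔ {⊥} → Q' ⊔ {⊥}`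
(realized on `Option`s, `none` playing the role of `⊥`) compatible with the structure
maps in the appropriate sense. -/
structure QCHom {S : QCSetting V ι} {Q Q' : Type*} (𝒬 : QC S Q) (𝒬' : QC S Q') where
  toFun : Option Q → Option Q'
  map_none : toFun none = none
  wt_eq : ∀ x y, toFun (some x) = some y → 𝒬'.wt y = 𝒬.wt x
  eps_eq : ∀ i x y, toFun (some x) = some y → 𝒬'.ε i y = 𝒬.ε i x
  phi_eq : ∀ i x y, toFun (some x) = some y → 𝒬'.φ i y = 𝒬.φ i x
  comm_e : ∀ i x x' y y', 𝒬.e i x = some x' → toFun (some x) = some y →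
    toFun (some x') = some y' → 𝒬'.e i y = some y'
  comm_f : ∀ i x x' y y', 𝒬.f i x = some x' → toFun (some x) = some y →
    toFun (some x') = some y' → 𝒬'.f i y = some y'

/-! ## The free `⊗`-quasi-crystal monoid -/

/-- Weight of a word: the sum of the weights of its letters. -/
def freeWt {S : QCSetting V ι} {Q : Type*} (𝒬 : QC S Q) : List Q → S.Λ
  | [] => 0
  | x :: w => 𝒬.wt x + freeWt 𝒬 w

/-- The map `ε̈_i` of the free `⊗`-quasi-crystal monoid. -/
def freeEps {S : QCSetting V ι} {Q : Type*} (𝒬 : QC S Q) (i : ι) : List Q → WithTop ℤ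
  | [] => 0
  | x :: w => max (𝒬.ε i x) (freeEps 𝒬 i w + ((-(S.pair (𝒬.wt x) i) : ℤ) : WithTop ℤ))

/-- The map `φ̈_i` of the free `⊗`-quasi-crystal monoid. -/
def freePhi {S : QCSetting V ι} {Q : Type*} (𝒬 : QC S Q) (i : ι) : List Q → WithTop ℤ
  | [] => 0
  | x :: w => max (𝒬.φ i x + ((S.pair (freeWt 𝒬 w) i : ℤ) : WithTop ℤ)) (freePhi 𝒬 i w)

/-- The operator `ë_i` of the free `⊗`-quasi-crystal monoid. -/
noncomputable def freeE {S : QCSetting V ι} {Q : Type*} (𝒬 : QC S Q) (i : ι) : List Q → Option (List Q)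
  | [] => none
  | x :: w => if freeEps 𝒬 i w ≤ 𝒬.φ i x
      then (𝒬.e i x).map (· :: w)
      else (freeE 𝒬 i w).map (x :: ·)

/-- The operator `f̈_i` of the free `⊗`-quasi-crystal monoid. -/
noncomputable def freeF {S : QCSetting V ι} {Q : Type*} (𝒬 : QC S Q) (i : ι) : List Q → Option (List Q)
  | [] => none
  | x :: w => if freeEps 𝒬 i w < 𝒬.φ i x
      then (𝒬.f i x).map (· :: w)
      else (freeF 𝒬 i w).map (x :: ·)

/-- The quasi-crystal structure of the free `⊗`-quasi-crystal monoid `F^⊗(𝒬)`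
on the free monoid `Q*`. -/
noncomputable def freeTensorQC {S : QCSetting V ι} {Q : Type*} (𝒬 : QC S Q) : QC S (FreeMonoid Q) where
  wt w := freeWt 𝒬 (FreeMonoid.toList w)
  ε i w := freeEps 𝒬 i (FreeMonoid.toList w)
  φ i w := freePhi 𝒬 i (FreeMonoid.toList w)
  e i w := (freeE 𝒬 i (FreeMonoid.toList w)).map (fun l => FreeMonoid.ofList l)
  f i w := (freeF 𝒬 i (FreeMonoid.toList w)).map (fun l => FreeMonoid.ofList l)

/-! ## The free `⊗̈`-quasi-crystal monoid -/

/-- The map `ε̈_i` of the free `⊗̈`-quasi-crystal monoid. -/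
noncomputable def qfreeEps {S : QCSetting V ι} {Q : Type*} (𝒬 : QC S Q) (i : ι) : List Q → WithTop ℤ
  | [] => 0
  | x :: w => if 0 < 𝒬.φ i x ∧ 0 < qfreeEps 𝒬 i w then ⊤
      else max (𝒬.ε i x) (qfreeEps 𝒬 i w + ((-(S.pair (𝒬.wt x) i) : ℤ) : WithTop ℤ))

/-- The map `φ̈_i` of the free `⊗̈`-quasi-crystal monoid. -/
noncomputable def qfreePhi {S : QCSetting V ι} {Q : Type*} (𝒬 : QC S Q) (i : ι) : List Q → WithTop ℤ
  | [] => 0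
  | x :: w => if 0 < 𝒬.φ i x ∧ 0 < qfreeEps 𝒬 i w then ⊤
      else max (𝒬.φ i x + ((S.pair (freeWt 𝒬 w) i : ℤ) : WithTop ℤ)) (qfreePhi 𝒬 i w)

/-- The operator `ë_i` of the free `⊗̈`-quasi-crystal monoid. -/
noncomputable def qfreeE {S : QCSetting V ι} {Q : Type*} (𝒬 : QC S Q) (i : ι) : List Q → Option (List Q)
  | [] => none
  | x :: w => if 0 < 𝒬.φ i x ∧ 0 < qfreeEps 𝒬 i w then none
      else if qfreeEps 𝒬 i w ≤ 𝒬.φ i x then (𝒬.e i x).map (· :: w)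
      else (qfreeE 𝒬 i w).map (x :: ·)

/-- The operator `f̈_i` of the free `⊗̈`-quasi-crystal monoid. -/
noncomputable def qfreeF {S : QCSetting V ι} {Q : Type*} (𝒬 : QC S Q) (i : ι) : List Q → Option (List Q)
  | [] => none
  | x :: w => if 0 < 𝒬.φ i x ∧ 0 < qfreeEps 𝒬 i w then none
      else if qfreeEps 𝒬 i w < 𝒬.φ i x then (𝒬.f i x).map (· :: w)
      else (qfreeF 𝒬 i w).map (x :: ·)

/-- The quasi-crystal structure of the free `⊗̈`-quasi-crystal monoid `F^⊗̈(𝒬)`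
on the free monoid `Q*`. -/
noncomputable def freeQTensorQC {S : QCSetting V ι} {Q : Type*} (𝒬 : QC S Q) : QC S (FreeMonoid Q) where
  wt w := freeWt 𝒬 (FreeMonoid.toList w)
  ε i w := qfreeEps 𝒬 i (FreeMonoid.toList w)
  φ i w := qfreePhi 𝒬 i (FreeMonoid.toList w)
  e i w := (qfreeE 𝒬 i (FreeMonoid.toList w)).map (fun l => FreeMonoid.ofList l)
  f i w := (qfreeF 𝒬 i (FreeMonoid.toList w)).map (fun l => FreeMonoid.ofList l)

/-! ## Connected components, plactic and hypoplactic congruences -/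

/-- Two elements are connected in the quasi-crystal graph if they are related by the
reflexive-symmetric-transitive closure of the edge relation given by the
quasi-Kashiwara operators. -/
def QC.conn {S : QCSetting V ι} {Q : Type*} (𝒬 : QC S Q) : Q → Q → Prop :=
  Relation.EqvGen (fun x y => ∃ i, 𝒬.f i x = some y ∨ 𝒬.f i y = some x ∨
    𝒬.e i x = some y ∨ 𝒬.e i y = some x)

/-- The connected component `𝒬(x)` of a quasi-crystal `𝒬` containing `x`, as a
quasi-crystal on the subtype of elements connected with `x`. -/
def QC.compQC {S : QCSetting V ι} {Q : Type*} (𝒬 : QC S Q) (x : Q) :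
    QC S {y : Q // 𝒬.conn x y} where
  wt y := 𝒬.wt y.1
  ε i y := 𝒬.ε i y.1
  φ i y := 𝒬.φ i y.1
  e i y := (𝒬.e i y.1).pmap (fun z hz => (⟨z, hz⟩ : {y : Q // 𝒬.conn x y}))
    (fun z hz => Relation.EqvGen.trans _ _ _ y.2
      (Relation.EqvGen.rel _ _ ⟨i, Or.inr (Or.inr (Or.inl hz))⟩))
  f i y := (𝒬.f i y.1).pmap (fun z hz => (⟨z, hz⟩ : {y : Q // 𝒬.conn x y}))
    (fun z hz => Relation.EqvGen.trans _ _ _ y.2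
      (Relation.EqvGen.rel _ _ ⟨i, Or.inl hz⟩))

/-- The plactic congruence: `u ≈ v` iff there is a quasi-crystal isomorphism between the
connected components of `u` and `v` in `F^⊗(𝒬)` mapping `u` to `v`. -/
def placticRel {S : QCSetting V ι} {Q : Type*} (𝒬 : QC S Q)
    (u v : FreeMonoid Q) : Prop :=
  ∃ ψ : QCHom ((freeTensorQC 𝒬).compQC u) ((freeTensorQC 𝒬).compQC v),
    Function.Bijective ψ.toFun ∧
    ψ.toFun (some ⟨u, Relation.EqvGen.refl u⟩) = some ⟨v, Relation.EqvGen.refl v⟩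

/-- The hypoplactic congruence: `u ∼̈ v` iff there is a quasi-crystal isomorphism between
the connected components of `u` and `v` in `F^⊗̈(𝒬)` mapping `u` to `v`. -/
def hypoRel {S : QCSetting V ι} {Q : Type*} (𝒬 : QC S Q)
    (u v : FreeMonoid Q) : Prop :=
  ∃ ψ : QCHom ((freeQTensorQC 𝒬).compQC u) ((freeQTensorQC 𝒬).compQC v),
    Function.Bijective ψ.toFun ∧
    ψ.toFun (some ⟨u, Relation.EqvGen.refl u⟩) = some ⟨v, Relation.EqvGen.refl v⟩

/-! ## Quasi-crystal monoids -/

/-- A monoid is equidivisible if whenever `x₁y₁ = x₂y₂` one of the factorizations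
refines the other. -/
def Equidivisible (M : Type*) [Monoid M] : Prop :=
  ∀ x₁ x₂ y₁ y₂ : M, x₁ * y₁ = x₂ * y₂ →
    ∃ z : M, (x₂ = x₁ * z ∧ y₁ = z * y₂) ∨ (x₁ = x₂ * z ∧ y₂ = z * y₁)

/-- A `⊗`-quasi-crystal monoid: a seminormal quasi-crystal structure on a monoid whose
structure maps interact with the multiplication by the tensor-product rules. -/
structure IsTensorQCMon {S : QCSetting V ι} {M : Type*} [Monoid M] (𝒬 : QC S M) : Prop where
  seminormal : 𝒬.IsSeminormal
  wt_mul : ∀ x y, 𝒬.wt (x * y) = 𝒬.wt x + 𝒬.wt y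
  eps_mul : ∀ i x y, 𝒬.ε i (x * y) =
    max (𝒬.ε i x) (𝒬.ε i y + ((-(S.pair (𝒬.wt x) i) : ℤ) : WithTop ℤ))
  phi_mul : ∀ i x y, 𝒬.φ i (x * y) =
    max (𝒬.φ i x + ((S.pair (𝒬.wt y) i : ℤ) : WithTop ℤ)) (𝒬.φ i y)
  e_mul : ∀ i x y, 𝒬.e i (x * y) =
    if 𝒬.ε i y ≤ 𝒬.φ i x then (𝒬.e i x).map (· * y) else (𝒬.e i y).map (x * ·)
  f_mul : ∀ i x y, 𝒬.f i (x * y) =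
    if 𝒬.ε i y < 𝒬.φ i x then (𝒬.f i x).map (· * y) else (𝒬.f i y).map (x * ·)

/-- A `⊗̈`-quasi-crystal monoid: a seminormal quasi-crystal structure on a monoid such
that `x ⊗̈ y ↦ x·y` induces a quasi-crystal homomorphism `M ⊗̈ M → M`. -/
def IsQTensorQCMon {S : QCSetting V ι} {M : Type*} [Monoid M] (𝒬 : QC S M) : Prop :=
  𝒬.IsSeminormal ∧
  ∃ ψ : QCHom (𝒬.qtensor 𝒬) 𝒬, ψ.toFun = Option.map (fun p => p.1 * p.2)

/-! ## The bicyclic monoid with zero `B₀` and the monoid `Z₀` -/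

/-- The bicyclic monoid `⟨−, + | (+)(−) = ε⟩`: elements are normal forms `(−)^a(+)^b`. -/
structure Bic where
  neg : ℕ
  pos : ℕ
deriving DecidableEq

instance : Mul Bic :=
  ⟨fun x y => ⟨x.neg + (y.neg - x.pos), y.pos + (x.pos - y.neg)⟩⟩

theorem Bic.mul_def (x y : Bic) :
    x * y = ⟨x.neg + (y.neg - x.pos), y.pos + (x.pos - y.neg)⟩ := rfl

instance : One Bic := ⟨⟨0, 0⟩⟩

theorem Bic.one_def : (1 : Bic) = ⟨0, 0⟩ := rfl

instance : Monoid Bic where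
  mul_assoc x y z := by
    simp only [Bic.mul_def, Bic.mk.injEq]
    omega
  one_mul x := by
    simp only [Bic.one_def, Bic.mul_def]
    cases x
    simp only [Bic.mk.injEq]
    omega
  mul_one x := by
    simp only [Bic.one_def, Bic.mul_def]
    cases x
    simp only [Bic.mk.injEq]
    omega

/-- The bicyclic monoid with a zero element adjoined,
`B₀ = ⟨0, −, + | (+)(−) = ε, 0x = x0 = 0⟩`. -/
abbrev B0 : Type := WithZero Bic

/-- The monoid `Z₀ = ⟨0, −, + | (+)(−) = 0, 0x = x0 = 0⟩`: the nonzero elements are the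
normal forms `(−)^a(+)^b`. -/
inductive Z0 : Type
  | zero : Z0
  | word : ℕ → ℕ → Z0
deriving DecidableEq

instance : Mul Z0 :=
  ⟨fun x y => match x, y with
    | Z0.zero, _ => Z0.zero
    | _, Z0.zero => Z0.zero
    | Z0.word a b, Z0.word c d =>
        if 0 < b ∧ 0 < c then Z0.zero else Z0.word (a + c) (b + d)⟩

instance : One Z0 := ⟨Z0.word 0 0⟩

instance : Zero Z0 := ⟨Z0.zero⟩

theorem Z0.one_def : (1 : Z0) = Z0.word 0 0 := rfl
theorem Z0.zero_def : (0 : Z0) = Z0.zero := rfl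
theorem Z0.zero_mul' (x : Z0) : Z0.zero * x = Z0.zero := by cases x <;> rfl
theorem Z0.mul_zero' (x : Z0) : x * Z0.zero = Z0.zero := by cases x <;> rfl
theorem Z0.word_mul_word (a b c d : ℕ) :
    Z0.word a b * Z0.word c d =
      if 0 < b ∧ 0 < c then Z0.zero else Z0.word (a + c) (b + d) := rfl

instance : MonoidWithZero Z0 where
  mul_assoc x y z := by
    cases x <;> cases y <;> cases z <;>
      simp only [Z0.zero_mul', Z0.mul_zero', Z0.word_mul_word]
    · split_ifs <;> simp_all [Z0.zero_mul', Z0.mul_zero', Z0.word_mul_word] <;>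
        split_ifs <;> simp_all <;> omega
  one_mul x := by
    cases x
    · rfl
    · simp [Z0.one_def, Z0.word_mul_word]
  mul_one x := by
    cases x
    · rfl
    · simp [Z0.one_def, Z0.word_mul_word]
  zero_mul x := by cases x <;> rfl
  mul_zero x := by cases x <;> rfl

/-! ## Signature maps -/

/-- The `i`-signature map for the tensor product `⊗`:
`sgn_i^⊗(w) = 0` if `ε̈_i(w) = +∞`, and `(−)^{ε̈_i(w)}(+)^{φ̈_i(w)}` otherwise. -/
noncomputable def tsgn {V : Type*} [NormedAddCommGroup V] [InnerProductSpace ℝ V] {ι : Type*}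
    {S : QCSetting V ι} {Q : Type*} (𝒬 : QC S Q) (i : ι) (w : FreeMonoid Q) : B0 :=
  if freeEps 𝒬 i (FreeMonoid.toList w) = ⊤ then 0
  else ↑(Bic.mk (WithTop.untopD 0 (freeEps 𝒬 i (FreeMonoid.toList w))).toNat
      (WithTop.untopD 0 (freePhi 𝒬 i (FreeMonoid.toList w))).toNat)

/-- The `i`-signature map for the quasi-tensor product `⊗̈`:
`sgn_i^⊗̈(w) = 0` if `ε̈_i(w) = +∞`, and `(−)^{ε̈_i(w)}(+)^{φ̈_i(w)}` otherwise. -/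
noncomputable def qsgn {V : Type*} [NormedAddCommGroup V] [InnerProductSpace ℝ V] {ι : Type*}
    {S : QCSetting V ι} {Q : Type*} (𝒬 : QC S Q) (i : ι) (w : FreeMonoid Q) : Z0 :=
  if qfreeEps 𝒬 i (FreeMonoid.toList w) = ⊤ then 0
  else Z0.word (WithTop.untopD 0 (qfreeEps 𝒬 i (FreeMonoid.toList w))).toNat
      (WithTop.untopD 0 (qfreePhi 𝒬 i (FreeMonoid.toList w))).toNat

/-!
The values of `ε̈ᵢ` and `φ̈ᵢ` on a seminormal quasi-crystal lie in `ℕ ∪ {+∞}`, so away from the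
locus where `φ̈ᵢ(x) > 0` and `ε̈ᵢ(y) > 0` (on which everything is `+∞` or `⊥`) one of `φ̈ᵢ(x)`,
`ε̈ᵢ(y)` vanishes. If `ε̈ᵢ(y) = 0`, then `ε̈ᵢ(x ⊗̈ y) = ε̈ᵢ(x)` and
`φ̈ᵢ(x ⊗̈ y) = φ̈ᵢ(x) + φ̈ᵢ(y)`, `ëᵢ` acts on `x`, and `f̈ᵢ` acts on `x` until `φ̈ᵢ(x)` drops
to `0`, then on `y`; symmetrically if `φ̈ᵢ(x) = 0`. In both regimes `ëᵢ` (resp. `f̈ᵢ`) lowers `ε̈ᵢ`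
(resp. `φ̈ᵢ`) by exactly one and is defined whenever that value is positive and finite, which
forces `ε̈ᵢ` and `φ̈ᵢ` to be the lengths of the strings.
-/

theorem WithTop.exists_natCast_eq_of_nonneg {a : WithTop ℤ} (h : 0 ≤ a) (ht : a ≠ ⊤) :
    ∃ n : ℕ, a = ((n : ℤ) : WithTop ℤ) := by
  lift a to ℤ using ht
  exact ⟨a.toNat, by norm_cast at h ⊢; omega⟩

theorem QCSetting.pair_add {S : QCSetting V ι} (u v : S.Λ) (i : ι) :
    S.pair (u + v) i = S.pair u i + S.pair v i := by
  have h : ((S.pair (u + v) i : ℤ) : ℝ) = S.pair u i + S.pair v i := by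
    simp only [S.pair_spec, AddSubgroup.coe_add, inner_add_left]
    ring
  exact_mod_cast h

section optIter

variable {R : Type*} {g : R → Option R} {r r' : R}

theorem optIter_succ_of_eq_some (h : g r = some r') (k : ℕ) :
    optIter g (k + 1) r = optIter g k r' := by
  simp [optIter, Function.iterate_succ_apply, h]

theorem isGreatest_optIter_of_eq_none (h : g r = none) :
    IsGreatest {k | (optIter g k r).isSome} 0 := by
  refine ⟨rfl, fun k hk => ?_⟩
  cases k with
  | zero => exact le_rfl
  | succ k =>
    have : optIter g (k + 1) r = none := by
      simp only [optIter, Function.iterate_succ_apply, Option.bind_some, h]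
      exact Function.iterate_fixed rfl k
    simp [this] at hk

theorem isGreatest_optIter_succ (h : g r = some r') {n : ℕ}
    (hn : IsGreatest {k | (optIter g k r').isSome} n) :
    IsGreatest {k | (optIter g k r).isSome} (n + 1) := by
  refine ⟨by simpa [optIter_succ_of_eq_some h] using hn.1, fun k hk => ?_⟩
  cases k with
  | zero => omega
  | succ k =>
    rw [Set.mem_ofPred_eq, optIter_succ_of_eq_some h] at hk
    exact Nat.succ_le_succ (hn.2 hk)

theorem exists_eq_isGreatest_optIter {μ : R → WithTop ℤ} (nonneg : ∀ r, 0 ≤ μ r)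
    (step : ∀ r r', g r = some r' → μ r = μ r' + 1)
    (isSome : ∀ r, 0 < μ r → μ r ≠ ⊤ → (g r).isSome) {r : R} (hr : μ r ≠ ⊤) :
    ∃ n : ℕ, μ r = ((n : ℤ) : WithTop ℤ) ∧ IsGreatest {k | (optIter g k r).isSome} n := by
  obtain ⟨n, hn⟩ := WithTop.exists_natCast_eq_of_nonneg (nonneg r) hr
  refine ⟨n, hn, ?_⟩
  induction n generalizing r with
  | zero =>
    apply isGreatest_optIter_of_eq_none
    rcases hg : g r with _ | r'
    · rfl
    · have hpos : 0 < μ r := (step r r' hg).symm ▸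
        lt_of_lt_of_le one_pos (le_add_of_nonneg_left (nonneg r'))
      simp [hn] at hpos
  | succ m ih =>
    obtain ⟨r', hg⟩ := Option.isSome_iff_exists.mp
      (isSome r (by rw [hn]; exact_mod_cast m.succ_pos) (by simp [hn]))
    have hr' : μ r' = ((m : ℤ) : WithTop ℤ) := by
      refine WithTop.add_right_cancel (z := 1) WithTop.one_ne_top ?_
      rw [← step r r' hg, hn]
      norm_cast
    exact isGreatest_optIter_succ hg (ih (hr' ▸ WithTop.coe_ne_top) hr')

end optIter

namespace QC

namespace IsSeminormal

variable {S : QCSetting V ι} {Q : Type*} {𝒬 : QC S Q} {i : ι} {x x' : Q}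

theorem phi_eq_top_iff (h : 𝒬.IsSeminormal) : 𝒬.φ i x = ⊤ ↔ 𝒬.ε i x = ⊤ := by
  simp [h.phi_eq]

theorem eps_nonneg (h : 𝒬.IsSeminormal) : 0 ≤ 𝒬.ε i x := by
  by_cases ht : 𝒬.ε i x = ⊤
  · simp [ht]
  · obtain ⟨n, hn, -⟩ := h.eps_spec i x ht
    rw [hn]
    exact_mod_cast n.cast_nonneg

theorem phi_nonneg (h : 𝒬.IsSeminormal) : 0 ≤ 𝒬.φ i x := by
  by_cases ht : 𝒬.ε i x = ⊤
  · simp [h.phi_eq_top_iff.2 ht]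
  · obtain ⟨n, hn, -⟩ := h.phi_spec i x ht
    rw [hn]
    exact_mod_cast n.cast_nonneg

theorem eps_ne_top_of_e_eq_some (h : 𝒬.IsSeminormal) (he : 𝒬.e i x = some x') : 𝒬.ε i x ≠ ⊤ :=
  fun ht => by simp [h.e_of_top i x ht] at he

theorem eps_ne_top_of_f_eq_some (h : 𝒬.IsSeminormal) (hf : 𝒬.f i x = some x') : 𝒬.ε i x ≠ ⊤ :=
  fun ht => by simp [h.f_of_top i x ht] at hf

theorem eps_eq_add_one_of_e_eq_some (h : 𝒬.IsSeminormal) (he : 𝒬.e i x = some x') :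
    𝒬.ε i x = 𝒬.ε i x' + 1 := by
  obtain ⟨n, hn, hg⟩ := h.eps_spec i x (h.eps_ne_top_of_e_eq_some he)
  obtain ⟨n', hn', hg'⟩ :=
    h.eps_spec i x' (h.eps_ne_top_of_f_eq_some ((h.e_iff_f i x x').1 he))
  rw [hn, hn', ← (isGreatest_optIter_succ he hg').unique hg]
  norm_cast

theorem phi_eq_add_one_of_f_eq_some (h : 𝒬.IsSeminormal) (hf : 𝒬.f i x = some x') :
    𝒬.φ i x = 𝒬.φ i x' + 1 := by
  obtain ⟨n, hn, hg⟩ := h.phi_spec i x (h.eps_ne_top_of_f_eq_some hf)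
  obtain ⟨n', hn', hg'⟩ :=
    h.phi_spec i x' (h.eps_ne_top_of_e_eq_some ((h.e_iff_f i x' x).2 hf))
  rw [hn, hn', ← (isGreatest_optIter_succ hf hg').unique hg]
  norm_cast

theorem e_isSome (h : 𝒬.IsSeminormal) (h0 : 0 < 𝒬.ε i x) (ht : 𝒬.ε i x ≠ ⊤) :
    (𝒬.e i x).isSome := by
  obtain ⟨n, hn, hg⟩ := h.eps_spec i x ht
  rcases he : 𝒬.e i x with _ | x'
  · obtain rfl := (isGreatest_optIter_of_eq_none he).unique hg
    simp [hn] at h0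
  · rfl

theorem f_isSome (h : 𝒬.IsSeminormal) (h0 : 0 < 𝒬.φ i x) (ht : 𝒬.φ i x ≠ ⊤) :
    (𝒬.f i x).isSome := by
  obtain ⟨n, hn, hg⟩ := h.phi_spec i x (h.phi_eq_top_iff.not.1 ht)
  rcases hf : 𝒬.f i x with _ | x'
  · obtain rfl := (isGreatest_optIter_of_eq_none hf).unique hg
    simp [hn] at h0
  · rfl

end IsSeminormal

variable {S : QCSetting V ι} {Q Q' : Type*} {𝒬 : QC S Q} {𝒬' : QC S Q'} {i : ι}
  {x x' : Q} {y y' : Q'}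

theorem qtensor_phi_eq (h : 𝒬.IsSeminormal) (h' : 𝒬'.IsSeminormal) (i : ι) (p : Q × Q') :
    (𝒬.qtensor 𝒬').φ i p =
      (𝒬.qtensor 𝒬').ε i p + ((S.pair ((𝒬.qtensor 𝒬').wt p) i : ℤ) : WithTop ℤ) := by
  simp only [qtensor]
  split_ifs
  · rfl
  · rw [S.pair_add, h.phi_eq, h'.phi_eq, ← max_add_add_right]
    congr 1 <;> rw [add_assoc, ← WithTop.coe_add]
    rw [neg_add_cancel_left]

theorem qtensor_eps_nonneg (h : 𝒬.IsSeminormal) (p : Q × Q') : 0 ≤ (𝒬.qtensor 𝒬').ε i p := by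
  simp only [qtensor]
  split_ifs
  · exact le_top
  · exact le_max_of_le_left h.eps_nonneg

theorem qtensor_phi_nonneg (h' : 𝒬'.IsSeminormal) (p : Q × Q') : 0 ≤ (𝒬.qtensor 𝒬').φ i p := by
  simp only [qtensor]
  split_ifs
  · exact le_top
  · exact le_max_of_le_right h'.phi_nonneg

theorem qtensor_eps_of_pos (hx : 0 < 𝒬.φ i x) (hy : 0 < 𝒬'.ε i y) :
    (𝒬.qtensor 𝒬').ε i (x, y) = ⊤ :=
  if_pos ⟨hx, hy⟩

theorem qtensor_phi_of_pos (hx : 0 < 𝒬.φ i x) (hy : 0 < 𝒬'.ε i y) :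
    (𝒬.qtensor 𝒬').φ i (x, y) = ⊤ :=
  if_pos ⟨hx, hy⟩

theorem qtensor_eps_of_eps_eq_zero (h : 𝒬.IsSeminormal) (hy : 𝒬'.ε i y = 0) :
    (𝒬.qtensor 𝒬').ε i (x, y) = 𝒬.ε i x := by
  simp only [qtensor, hy, lt_irrefl, and_false, if_false, zero_add]
  refine max_eq_left ?_
  have hφ := h.phi_eq i x ▸ h.phi_nonneg (i := i) (x := x)
  rcases eq_or_ne (𝒬.ε i x) ⊤ with hε | hε
  · simp [hε]
  lift 𝒬.ε i x to ℤ using hε with a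
  norm_cast at hφ ⊢
  omega

theorem qtensor_eps_of_phi_eq_zero (h : 𝒬.IsSeminormal) (h' : 𝒬'.IsSeminormal)
    (hx : 𝒬.φ i x = 0) : (𝒬.qtensor 𝒬').ε i (x, y) = 𝒬.ε i x + 𝒬'.ε i y := by
  simp only [qtensor, hx, lt_irrefl, false_and, if_false]
  have hφ := h.phi_eq i x ▸ hx
  have hε : 𝒬.ε i x ≠ ⊤ := h.phi_eq_top_iff.not.1 (hx ▸ WithTop.zero_ne_top)
  lift 𝒬.ε i x to ℤ using hε with a
  have hA : S.pair (𝒬.wt x) i = -a := by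
    norm_cast at hφ
    omega
  rw [hA, neg_neg, add_comm (a : WithTop ℤ)]
  exact max_eq_right (le_add_of_nonneg_left h'.eps_nonneg)

theorem qtensor_phi_of_eps_eq_zero (h : 𝒬.IsSeminormal) (h' : 𝒬'.IsSeminormal)
    (hy : 𝒬'.ε i y = 0) : (𝒬.qtensor 𝒬').φ i (x, y) = 𝒬.φ i x + 𝒬'.φ i y := by
  simp only [qtensor, hy, lt_irrefl, and_false, if_false]
  rw [h'.phi_eq i y, hy, zero_add]
  exact max_eq_left (le_add_of_nonneg_left h.phi_nonneg)

theorem qtensor_phi_of_phi_eq_zero (h' : 𝒬'.IsSeminormal) (hx : 𝒬.φ i x = 0) :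
    (𝒬.qtensor 𝒬').φ i (x, y) = 𝒬'.φ i y := by
  simp only [qtensor, hx, lt_irrefl, false_and, if_false, zero_add]
  rw [h'.phi_eq i y]
  exact max_eq_right (le_add_of_nonneg_left h'.eps_nonneg)

theorem qtensor_e_eq_some_iff (h : 𝒬.IsSeminormal) (h' : 𝒬'.IsSeminormal) :
    (𝒬.qtensor 𝒬').e i (x, y) = some (x', y') ↔
      (𝒬'.ε i y = 0 ∧ 𝒬.e i x = some x' ∧ y' = y) ∨
      (𝒬.φ i x = 0 ∧ 0 < 𝒬'.ε i y ∧ x' = x ∧ 𝒬'.e i y = some y') := by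
  rcases (h.phi_nonneg (i := i) (x := x)).eq_or_lt with hx | hx <;>
    rcases (h'.eps_nonneg (i := i) (x := y)).eq_or_lt with hy | hy
  · simp [qtensor, ← hx, ← hy, and_comm, eq_comm]
  · simp [qtensor, ← hx, hy, hy.ne', not_le.2 hy, and_comm, eq_comm]
  · simp [qtensor, hx, ← hy, hx.ne', hx.le, and_comm, eq_comm]
  · simp [qtensor, hx, hy, hx.ne', hy.ne']

theorem qtensor_f_eq_some_iff (h : 𝒬.IsSeminormal) (h' : 𝒬'.IsSeminormal) :
    (𝒬.qtensor 𝒬').f i (x, y) = some (x', y') ↔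
      (𝒬'.ε i y = 0 ∧ 0 < 𝒬.φ i x ∧ 𝒬.f i x = some x' ∧ y' = y) ∨
      (𝒬.φ i x = 0 ∧ x' = x ∧ 𝒬'.f i y = some y') := by
  rcases (h.phi_nonneg (i := i) (x := x)).eq_or_lt with hx | hx <;>
    rcases (h'.eps_nonneg (i := i) (x := y)).eq_or_lt with hy | hy
  · simp [qtensor, ← hx, ← hy, and_comm, eq_comm]
  · simp [qtensor, ← hx, hy, hy.ne', not_lt.2 hy.le, and_comm, eq_comm]
  · simp [qtensor, hx, ← hy, hx.ne', and_comm, eq_comm]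
  · simp [qtensor, hx, hy, hx.ne', hy.ne']

theorem qtensor_wt_e (h : 𝒬.IsSeminormal) (h' : 𝒬'.IsSeminormal)
    (he : (𝒬.qtensor 𝒬').e i (x, y) = some (x', y')) :
    (((𝒬.qtensor 𝒬').wt (x', y') : S.Λ) : V) = (𝒬.qtensor 𝒬').wt (x, y) + S.simple i := by
  rcases (qtensor_e_eq_some_iff h h').1 he with ⟨-, hx, rfl⟩ | ⟨-, -, rfl, hy⟩
  · simp only [qtensor, AddSubgroup.coe_add, h.wt_e i x x' hx]
    abel
  · simp only [qtensor, AddSubgroup.coe_add, h'.wt_e i y y' hy]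
    abel

theorem qtensor_wt_f (h : 𝒬.IsSeminormal) (h' : 𝒬'.IsSeminormal)
    (hf : (𝒬.qtensor 𝒬').f i (x, y) = some (x', y')) :
    (((𝒬.qtensor 𝒬').wt (x', y') : S.Λ) : V) = (𝒬.qtensor 𝒬').wt (x, y) - S.simple i := by
  rcases (qtensor_f_eq_some_iff h h').1 hf with ⟨-, -, hx, rfl⟩ | ⟨-, rfl, hy⟩
  · simp only [qtensor, AddSubgroup.coe_add, h.wt_f i x x' hx]
    abel
  · simp only [qtensor, AddSubgroup.coe_add, h'.wt_f i y y' hy]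
    abel

theorem qtensor_e_eq_some_iff_f_eq_some (h : 𝒬.IsSeminormal) (h' : 𝒬'.IsSeminormal) :
    (𝒬.qtensor 𝒬').e i (x, y) = some (x', y') ↔ (𝒬.qtensor 𝒬').f i (x', y') = some (x, y) := by
  rw [qtensor_e_eq_some_iff h h', qtensor_f_eq_some_iff h h']
  constructor
  · rintro (⟨hy, hx, rfl⟩ | ⟨hx, -, rfl, hy⟩)
    · refine Or.inl ⟨hy, ?_, (h.e_iff_f i x x').1 hx, rfl⟩
      rw [h.phi_eq_add_one_of_f_eq_some ((h.e_iff_f i x x').1 hx)]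
      exact lt_of_lt_of_le one_pos (le_add_of_nonneg_left h.phi_nonneg)
    · exact Or.inr ⟨hx, rfl, (h'.e_iff_f i y y').1 hy⟩
  · rintro (⟨hy, -, hx, rfl⟩ | ⟨hx, rfl, hy⟩)
    · exact Or.inl ⟨hy, (h.e_iff_f i x x').2 hx, rfl⟩
    · refine Or.inr ⟨hx, ?_, rfl, (h'.e_iff_f i y y').2 hy⟩
      rw [h'.eps_eq_add_one_of_e_eq_some ((h'.e_iff_f i y y').2 hy)]
      exact lt_of_lt_of_le one_pos (le_add_of_nonneg_left h'.eps_nonneg)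

theorem qtensor_eps_ne_top_of_e_eq_some (h : 𝒬.IsSeminormal) (h' : 𝒬'.IsSeminormal)
    (he : (𝒬.qtensor 𝒬').e i (x, y) = some (x', y')) : (𝒬.qtensor 𝒬').ε i (x, y) ≠ ⊤ := by
  rcases (qtensor_e_eq_some_iff h h').1 he with ⟨hy, hx, -⟩ | ⟨hx, -, -, hy⟩
  · rw [qtensor_eps_of_eps_eq_zero h hy]
    exact h.eps_ne_top_of_e_eq_some hx
  · rw [qtensor_eps_of_phi_eq_zero h h' hx]
    exact WithTop.add_ne_top.2
      ⟨h.phi_eq_top_iff.not.1 (hx ▸ WithTop.zero_ne_top), h'.eps_ne_top_of_e_eq_some hy⟩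

theorem qtensor_eps_ne_top_of_f_eq_some (h : 𝒬.IsSeminormal) (h' : 𝒬'.IsSeminormal)
    (hf : (𝒬.qtensor 𝒬').f i (x, y) = some (x', y')) : (𝒬.qtensor 𝒬').ε i (x, y) ≠ ⊤ := by
  rcases (qtensor_f_eq_some_iff h h').1 hf with ⟨hy, -, hx, -⟩ | ⟨hx, -, hy⟩
  · rw [qtensor_eps_of_eps_eq_zero h hy]
    exact h.eps_ne_top_of_f_eq_some hx
  · rw [qtensor_eps_of_phi_eq_zero h h' hx]
    exact WithTop.add_ne_top.2
      ⟨h.phi_eq_top_iff.not.1 (hx ▸ WithTop.zero_ne_top), h'.eps_ne_top_of_f_eq_some hy⟩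

theorem qtensor_eps_eq_add_one_of_e_eq_some (h : 𝒬.IsSeminormal) (h' : 𝒬'.IsSeminormal)
    (he : (𝒬.qtensor 𝒬').e i (x, y) = some (x', y')) :
    (𝒬.qtensor 𝒬').ε i (x, y) = (𝒬.qtensor 𝒬').ε i (x', y') + 1 := by
  rcases (qtensor_e_eq_some_iff h h').1 he with ⟨hy, hx, rfl⟩ | ⟨hx, -, rfl, hy⟩
  · rw [qtensor_eps_of_eps_eq_zero h hy, qtensor_eps_of_eps_eq_zero h hy,
      h.eps_eq_add_one_of_e_eq_some hx]
  · rw [qtensor_eps_of_phi_eq_zero h h' hx, qtensor_eps_of_phi_eq_zero h h' hx,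
      h'.eps_eq_add_one_of_e_eq_some hy, add_assoc]

theorem qtensor_phi_eq_add_one_of_f_eq_some (h : 𝒬.IsSeminormal) (h' : 𝒬'.IsSeminormal)
    (hf : (𝒬.qtensor 𝒬').f i (x, y) = some (x', y')) :
    (𝒬.qtensor 𝒬').φ i (x, y) = (𝒬.qtensor 𝒬').φ i (x', y') + 1 := by
  rcases (qtensor_f_eq_some_iff h h').1 hf with ⟨hy, -, hx, rfl⟩ | ⟨hx, rfl, hy⟩
  · rw [qtensor_phi_of_eps_eq_zero h h' hy, qtensor_phi_of_eps_eq_zero h h' hy,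
      h.phi_eq_add_one_of_f_eq_some hx, add_right_comm]
  · rw [qtensor_phi_of_phi_eq_zero h' hx, qtensor_phi_of_phi_eq_zero h' hx,
      h'.phi_eq_add_one_of_f_eq_some hy]

theorem qtensor_e_isSome (h : 𝒬.IsSeminormal) (h' : 𝒬'.IsSeminormal)
    (h0 : 0 < (𝒬.qtensor 𝒬').ε i (x, y)) (ht : (𝒬.qtensor 𝒬').ε i (x, y) ≠ ⊤) :
    ((𝒬.qtensor 𝒬').e i (x, y)).isSome := by
  rcases (h'.eps_nonneg (i := i) (x := y)).eq_or_lt with hy | hy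
  · rw [qtensor_eps_of_eps_eq_zero h hy.symm] at h0 ht
    obtain ⟨x', hx⟩ := Option.isSome_iff_exists.1 (h.e_isSome h0 ht)
    exact Option.isSome_iff_exists.2
      ⟨(x', y), (qtensor_e_eq_some_iff h h').2 (Or.inl ⟨hy.symm, hx, rfl⟩)⟩
  rcases (h.phi_nonneg (i := i) (x := x)).eq_or_lt with hx | hx
  · rw [qtensor_eps_of_phi_eq_zero h h' hx.symm] at ht
    obtain ⟨y', hy'⟩ := Option.isSome_iff_exists.1 (h'.e_isSome hy (WithTop.add_ne_top.1 ht).2)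
    exact Option.isSome_iff_exists.2
      ⟨(x, y'), (qtensor_e_eq_some_iff h h').2 (Or.inr ⟨hx.symm, hy, rfl, hy'⟩)⟩
  · exact absurd (qtensor_eps_of_pos hx hy) ht

theorem qtensor_f_isSome (h : 𝒬.IsSeminormal) (h' : 𝒬'.IsSeminormal)
    (h0 : 0 < (𝒬.qtensor 𝒬').φ i (x, y)) (ht : (𝒬.qtensor 𝒬').φ i (x, y) ≠ ⊤) :
    ((𝒬.qtensor 𝒬').f i (x, y)).isSome := by
  rcases (h.phi_nonneg (i := i) (x := x)).eq_or_lt with hx | hx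
  · rw [qtensor_phi_of_phi_eq_zero h' hx.symm] at h0 ht
    obtain ⟨y', hy⟩ := Option.isSome_iff_exists.1 (h'.f_isSome h0 ht)
    exact Option.isSome_iff_exists.2
      ⟨(x, y'), (qtensor_f_eq_some_iff h h').2 (Or.inr ⟨hx.symm, rfl, hy⟩)⟩
  rcases (h'.eps_nonneg (i := i) (x := y)).eq_or_lt with hy | hy
  · rw [qtensor_phi_of_eps_eq_zero h h' hy.symm] at ht
    obtain ⟨x', hx'⟩ := Option.isSome_iff_exists.1 (h.f_isSome hx (WithTop.add_ne_top.1 ht).1)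
    exact Option.isSome_iff_exists.2
      ⟨(x', y), (qtensor_f_eq_some_iff h h').2 (Or.inl ⟨hy.symm, hx, hx', rfl⟩)⟩
  · exact absurd (qtensor_phi_of_pos hx hy) ht

end QC

/-- The quasi-tensor product of two seminormal quasi-crystals of type
`Φ` satisfies all the axioms of a seminormal quasi-crystal of type `Φ`. -/
theorem qtensor_isSeminormal {V : Type*} [NormedAddCommGroup V] [InnerProductSpace ℝ V]
    {ι : Type*} {S : QCSetting V ι} {Q Q' : Type*} (𝒬 : QC S Q) (𝒬' : QC S Q')
    (h : 𝒬.IsSeminormal) (h' : 𝒬'.IsSeminormal) :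
    (𝒬.qtensor 𝒬').IsSeminormal :=
  { phi_eq := QC.qtensor_phi_eq h h'
    wt_e _ _ _ := QC.qtensor_wt_e h h'
    wt_f _ _ _ := QC.qtensor_wt_f h h'
    e_iff_f _ _ _ := QC.qtensor_e_eq_some_iff_f_eq_some h h'
    e_of_top _ _ ht := Option.eq_none_iff_forall_ne_some.2 fun _ he =>
      QC.qtensor_eps_ne_top_of_e_eq_some h h' he ht
    f_of_top _ _ ht := Option.eq_none_iff_forall_ne_some.2 fun _ hf =>
      QC.qtensor_eps_ne_top_of_f_eq_some h h' hf ht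
    eps_spec _ _ hp := exists_eq_isGreatest_optIter (QC.qtensor_eps_nonneg h)
      (fun _ _ => QC.qtensor_eps_eq_add_one_of_e_eq_some h h')
      (fun _ => QC.qtensor_e_isSome h h') hp
    phi_spec _ _ hp := exists_eq_isGreatest_optIter (QC.qtensor_phi_nonneg h')
      (fun _ _ => QC.qtensor_phi_eq_add_one_of_f_eq_some h h')
      (fun _ => QC.qtensor_f_isSome h h')
      (by rw [QC.qtensor_phi_eq h h']; exact WithTop.add_ne_top.2 ⟨hp, WithTop.coe_ne_top⟩) }
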